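/- Commuting ensembles make the timing of partial information irrelevant: Let 𝓔 be a state ensemble on a finite-dimensional complex Hilbert space ℋ with finite label set X such that 𝓔(x)·𝓔(x') = 𝓔(x')·𝓔(x) for all x, x' ∈ X. Then for every finite sets Y, T, every score function f : X × Y → [0,1], and every partial information map α, one has E^prior_{f,α}(𝓔) = E^post_{f,α}(𝓔). In particular, for every collection of measurements (N_t)_{t∈T} with outcome set Y there exists a compatible collection (N'_t)_{t∈T} with E^prior_{f,α}(𝓔; (N_t)) = E^prior_{f,α}(𝓔; (N'_t)). -/

import Mathlib

open scoped BigOperators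
open Matrix
open scoped ComplexOrder

noncomputable section

abbrev Mat (d : ℕ) := Matrix (Fin d) (Fin d) ℂ

def IsStateEnsemble {d : ℕ} {X : Type*} [Fintype X] (E : X → Mat d) : Prop :=
  (∀ x, (E x).PosSemidef) ∧ (∑ x, (E x).trace) = 1

def IsMeasurement {d : ℕ} {Z : Type*} [Fintype Z] (M : Z → Mat d) : Prop :=
  (∀ z, (M z).PosSemidef) ∧ (∑ z, M z) = 1

def IsScore {X Y : Type*} (f : X → Y → ℝ) : Prop :=
  ∀ x y, 0 ≤ f x y ∧ f x y ≤ 1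

def IsPartialInfo {T X : Type*} [Fintype T] (α : T → X → ℝ) : Prop :=
  (∀ t x, 0 ≤ α t x) ∧ ∀ x, (∑ t, α t x) = 1

def IsPostProc {T Y Z : Type*} [Fintype Y] (ν : T → Y → Z → ℝ) : Prop :=
  (∀ t y z, 0 ≤ ν t y z) ∧ ∀ t z, (∑ y, ν t y z) = 1

def Pg {d : ℕ} {X : Type*} [Fintype X] (E M : X → Mat d) : ℝ :=
  ∑ x, ((E x) * (M x)).trace.re

def PgMax {d : ℕ} {X : Type*} [Fintype X] (E : X → Mat d) : ℝ :=
  sSup {p : ℝ | ∃ M : X → Mat d, IsMeasurement M ∧ p = Pg E M}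

def Escore {d : ℕ} {X Y : Type*} [Fintype X] [Fintype Y]
    (f : X → Y → ℝ) (E : X → Mat d) (M : Y → Mat d) : ℝ :=
  ∑ x, ∑ y, f x y * ((E x) * (M y)).trace.re

def EMax {d : ℕ} {X Y : Type*} [Fintype X] [Fintype Y]
    (f : X → Y → ℝ) (E : X → Mat d) : ℝ :=
  sSup {p : ℝ | ∃ M : Y → Mat d, IsMeasurement M ∧ p = Escore f E M}

def Epost {d : ℕ} {X Y T Z : Type*} [Fintype X] [Fintype Y] [Fintype T] [Fintype Z]
    (f : X → Y → ℝ) (α : T → X → ℝ) (E : X → Mat d)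
    (M : Z → Mat d) (ν : T → Y → Z → ℝ) : ℝ :=
  ∑ x, ∑ y, ∑ t, ∑ z, f x y * α t x * ν t y z * ((E x) * (M z)).trace.re

def EpostMax {d : ℕ} {X Y T : Type*} [Fintype X] [Fintype Y] [Fintype T]
    (f : X → Y → ℝ) (α : T → X → ℝ) (E : X → Mat d) : ℝ :=
  sSup {p : ℝ | ∃ (n : ℕ) (M : Fin n → Mat d) (ν : T → Y → Fin n → ℝ),
    IsMeasurement M ∧ IsPostProc ν ∧ p = Epost f α E M ν}

def Eprior {d : ℕ} {X Y T : Type*} [Fintype X] [Fintype Y] [Fintype T]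
    (f : X → Y → ℝ) (α : T → X → ℝ) (E : X → Mat d) (N : T → Y → Mat d) : ℝ :=
  ∑ x, ∑ y, ∑ t, f x y * α t x * ((E x) * (N t y)).trace.re

def EpriorMax {d : ℕ} {X Y T : Type*} [Fintype X] [Fintype Y] [Fintype T]
    (f : X → Y → ℝ) (α : T → X → ℝ) (E : X → Mat d) : ℝ :=
  sSup {p : ℝ | ∃ N : T → Y → Mat d, (∀ t, IsMeasurement (N t)) ∧ p = Eprior f α E N}

def IsCompatible {d : ℕ} {T Y : Type*} [Fintype T] [Fintype Y] (N : T → Y → Mat d) : Prop :=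
  ∃ (n : ℕ) (M : Fin n → Mat d) (ν : T → Y → Fin n → ℝ),
    IsMeasurement M ∧ IsPostProc ν ∧ ∀ t y, N t y = ∑ z, ν t y z • M z

def stdPost {T Y : Type*} [DecidableEq Y] : T → Y → (T → Y) → ℝ :=
  fun t y φ => if y = φ t then 1 else 0

def Δconst {d : ℕ} {X Y : Type*} [Fintype X] [Fintype Y]
    (f : X → Y → ℝ) (E : X → Mat d) : ℝ :=
  ∑ x, ∑ y, f x y * (E x).trace.re

def auxEns {d : ℕ} {X Y : Type*} [Fintype X] [Fintype Y]
    (f : X → Y → ℝ) (E : X → Mat d) (y : Y) : Mat d :=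
  (Δconst f E)⁻¹ • ∑ x, f x y • E x

def auxEnsPost {d : ℕ} {X Y T : Type*} [Fintype X] [Fintype Y] [Fintype T]
    (f : X → Y → ℝ) (α : T → X → ℝ) (E : X → Mat d) (φ : T → Y) : Mat d :=
  ((Fintype.card Y : ℝ) ^ (Fintype.card T - 1) * Δconst f E)⁻¹ •
    ∑ x, ∑ t, (f x (φ t) * α t x) • E x

/-! Commuting Hermitian matrices are simultaneously unitarily diagonalisable:
`E x = U * diagonal (c x) * star U`. Hence `tr (E x * N)` only sees the diagonal of
`star U * N * U`, and replacing every effect `N t y` by its pinching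
`U * diagonal (diag (star U * N t y * U)) * star U` changes no score. The pinched collection is
the measurement in the orthonormal basis of columns of `U`, post-processed by the stochastic
matrices `ν t y j = ⟪u_j, N t y u_j⟫`, so it is compatible. Conversely every post-processed
measurement is a collection of measurements, so both optimisations range over the same values. -/

open scoped Function

theorem LinearMap.IsSymmetric.exists_orthonormalBasis_eigenvectors_of_commute
    {𝕜 E ι : Type*} [RCLike 𝕜] [NormedAddCommGroup E] [InnerProductSpace 𝕜 E]
    [FiniteDimensional 𝕜 E] {n : ℕ} (hn : Module.finrank 𝕜 E = n) {T : ι → Module.End 𝕜 E}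
    (hT : ∀ i, (T i).IsSymmetric) (hC : Pairwise (Commute on T)) :
    ∃ (b : OrthonormalBasis (Fin n) 𝕜 E) (μ : ι → Fin n → 𝕜),
      ∀ i j, T i (b j) = μ i j • b j := by
  classical
  let V : (ι → 𝕜) → Submodule 𝕜 E := fun χ ↦ ⨅ i, Module.End.eigenspace (T i) (χ i)
  have hV : DirectSum.IsInternal V := directSum_isInternal_of_pairwise_commute hT hC
  -- `subordinateOrthonormalBasis` needs a finite index: keep only the nonzero joint eigenspaces.
  have : Fintype {χ // V χ ≠ ⊥} :=
    (Submodule.finite_ne_bot_of_iSupIndep hV.submodule_iSupIndep).fintype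
  have hV' := DirectSum.isInternal_ne_bot_iff.mpr hV
  have hO := (orthogonalFamily_iInf_eigenspaces hT).comp
    (Subtype.val_injective (p := fun χ ↦ V χ ≠ ⊥))
  exact ⟨hV'.subordinateOrthonormalBasis hn hO,
    fun i j ↦ (hV'.subordinateOrthonormalBasisIndex hn j hO).1 i,
    fun i j ↦ Module.End.mem_eigenspace_iff.mp <| (Submodule.mem_iInf _).mp
      (hV'.subordinateOrthonormalBasis_subordinate hn j hO) i⟩

theorem Matrix.exists_unitary_forall_eq_mul_diagonal_mul_star_of_commute
    {𝕜 n ι : Type*} [RCLike 𝕜] [Fintype n] [DecidableEq n] {A : ι → Matrix n n 𝕜}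
    (hA : ∀ i, (A i).IsHermitian) (hC : ∀ i j, Commute (A i) (A j)) :
    ∃ U ∈ unitaryGroup n 𝕜, ∃ c : ι → n → 𝕜, ∀ i, A i = U * diagonal (c i) * star U := by
  let T : ι → Module.End 𝕜 (EuclideanSpace 𝕜 n) := fun i ↦ toLpLinAlgEquiv 2 (A i)
  have hT : ∀ i, (T i).IsSymmetric := fun i ↦ isSymmetric_toEuclideanLin_iff.mpr (hA i)
  have hTC : Pairwise (Commute on T) := fun i j _ ↦ (hC i j).map (toLpLinAlgEquiv 2)
  obtain ⟨b, μ, hb⟩ := LinearMap.IsSymmetric.exists_orthonormalBasis_eigenvectors_of_commute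
    (finrank_euclideanSpace (𝕜 := 𝕜) (ι := n)) hT hTC
  let e := (Fintype.equivFin n).symm
  let U := (EuclideanSpace.basisFun n 𝕜).toBasis.toMatrix (b.reindex e)
  have hU : U ∈ unitaryGroup n 𝕜 :=
    (EuclideanSpace.basisFun n 𝕜).toMatrix_orthonormalBasis_mem_unitary _
  have hU_apply : ∀ k j, U k j = b (e.symm j) k := fun k j ↦ by
    simp [U, Module.Basis.toMatrix_apply]
  refine ⟨U, hU, fun i ↦ μ i ∘ e.symm, fun i ↦ ?_⟩
  have hAU : A i * U = U * diagonal (μ i ∘ e.symm) := by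
    ext k j
    have hcol : (A i *ᵥ WithLp.ofLp (b (e.symm j))) k = μ i (e.symm j) * b (e.symm j) k :=
      congr(WithLp.ofLp $(hb i (e.symm j)) k)
    rw [mul_diagonal, hU_apply, Function.comp_apply, mul_comm, ← hcol]
    simp only [mul_apply, mulVec, dotProduct, hU_apply]
  calc A i = A i * U * star U := by rw [mul_assoc, mem_unitaryGroup_iff.mp hU, mul_one]
    _ = U * diagonal (μ i ∘ e.symm) * star U := by rw [hAU]

theorem Matrix.trace_mul_diagonal_mul_star_mul {n R : Type*} [Fintype n] [DecidableEq n]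
    [CommRing R] [StarRing R] (U : Matrix n n R) (c : n → R) (N : Matrix n n R) :
    (U * diagonal c * star U * N).trace = ∑ j, c j * (star U * N * U) j j := by
  rw [mul_assoc (U * diagonal c), trace_mul_comm, ← mul_assoc, trace_mul_comm]
  simp [trace, diagonal_mul]

theorem Matrix.sum_smul_mul_diagonal_single_mul_star {n : Type*} [Fintype n] [DecidableEq n]
    (U : Matrix n n ℂ) (r : n → ℝ) :
    ∑ j, r j • (U * diagonal (Pi.single j 1) * star U) =
      U * diagonal (fun j ↦ (r j : ℂ)) * star U := by
  have hdiag : diagonal (fun j ↦ (r j : ℂ)) = ∑ j, r j • diagonal (Pi.single j 1) := by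
    ext k l
    by_cases hkl : k = l <;> simp [hkl, Pi.single_apply, sum_apply]
  simp only [hdiag, Finset.mul_sum, Finset.sum_mul, mul_smul_comm, smul_mul_assoc]

section Measurements

variable {d : ℕ}

def postProcess {T Y Z : Type*} [Fintype Z] (ν : T → Y → Z → ℝ) (M : Z → Mat d) :
    T → Y → Mat d :=
  fun t y ↦ ∑ z, ν t y z • M z

theorem IsMeasurement.postProcess {T Y Z : Type*} [Fintype Y] [Fintype Z] {M : Z → Mat d}
    {ν : T → Y → Z → ℝ} (hM : IsMeasurement M) (hν : IsPostProc ν) (t : T) :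
    IsMeasurement (postProcess ν M t) := by
  refine ⟨fun y ↦ posSemidef_sum _ fun z _ ↦ (hM.1 z).smul (hν.1 t y z), ?_⟩
  simp only [_root_.postProcess]
  rw [Finset.sum_comm]
  simp only [← Finset.sum_smul, hν.2 t, one_smul, hM.2]

theorem epost_eq_eprior_postProcess {X Y T Z : Type*} [Fintype X] [Fintype Y] [Fintype T]
    [Fintype Z] (f : X → Y → ℝ) (α : T → X → ℝ) (E : X → Mat d) (M : Z → Mat d)
    (ν : T → Y → Z → ℝ) :
    Epost f α E M ν = Eprior f α E (postProcess ν M) := by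
  simp only [Epost, Eprior, postProcess, Matrix.trace_sum, Complex.re_sum,
    Finset.mul_sum, mul_smul_comm, Matrix.trace_smul, Complex.real_smul, Complex.re_ofReal_mul,
    mul_assoc]

theorem eprior_congr {X Y T : Type*} [Fintype X] [Fintype Y] [Fintype T]
    (f : X → Y → ℝ) (α : T → X → ℝ) (E : X → Mat d) {N N' : T → Y → Mat d}
    (h : ∀ x t y, (E x * N t y).trace = (E x * N' t y).trace) :
    Eprior f α E N = Eprior f α E N' := by
  simp only [Eprior, h]

theorem IsMeasurement.star_mul_mul {Y : Type*} [Fintype Y] {N : Y → Mat d}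
    (hN : IsMeasurement N) {U : Mat d} (hU : U ∈ Matrix.unitaryGroup (Fin d) ℂ) :
    IsMeasurement fun y ↦ star U * N y * U := by
  refine ⟨fun y ↦ by simpa only [Matrix.star_eq_conjTranspose] using
    (hN.1 y).conjTranspose_mul_mul_same U, ?_⟩
  rw [← Finset.sum_mul, ← Finset.mul_sum, hN.2, mul_one, Matrix.mem_unitaryGroup_iff'.mp hU]

theorem isPostProc_re_diag {T Y : Type*} [Fintype Y] {N : T → Y → Mat d}
    (hN : ∀ t, IsMeasurement (N t)) : IsPostProc fun t y j ↦ (N t y j j).re := by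
  refine ⟨fun t y j ↦ (Complex.nonneg_iff.mp ((hN t).1 y).diag_nonneg).1, fun t j ↦ ?_⟩
  rw [← Complex.re_sum, ← Matrix.sum_apply, (hN t).2]
  simp

def basisMeasurement (U : Mat d) : Fin d → Mat d :=
  fun j ↦ U * Matrix.diagonal (Pi.single j 1) * star U

theorem postProcess_basisMeasurement {T Y : Type*} (U : Mat d) (ν : T → Y → Fin d → ℝ)
    (t : T) (y : Y) :
    postProcess ν (basisMeasurement U) t y =
      U * Matrix.diagonal (fun j ↦ (ν t y j : ℂ)) * star U :=
  Matrix.sum_smul_mul_diagonal_single_mul_star U (ν t y)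

theorem isMeasurement_basisMeasurement {U : Mat d} (hU : U ∈ Matrix.unitaryGroup (Fin d) ℂ) :
    IsMeasurement (basisMeasurement U) := by
  refine ⟨fun j ↦ ?_, ?_⟩
  · simpa only [basisMeasurement, Matrix.star_eq_conjTranspose] using
      (Matrix.posSemidef_diagonal_iff.mpr
        (Pi.single_nonneg.mpr zero_le_one)).mul_mul_conjTranspose_same U
  · have h := Matrix.sum_smul_mul_diagonal_single_mul_star U 1
    simp only [Pi.one_apply, one_smul, Complex.ofReal_one, Matrix.diagonal_one, mul_one] at h
    exact h.trans (Matrix.mem_unitaryGroup_iff.mp hU)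

theorem trace_mul_eq_trace_mul_pinching {U : Mat d} (hU : U ∈ Matrix.unitaryGroup (Fin d) ℂ)
    (c : Fin d → ℂ) {N : Mat d} (hN : N.IsHermitian) :
    (U * Matrix.diagonal c * star U * N).trace =
      (U * Matrix.diagonal c * star U *
        (U * Matrix.diagonal (fun j ↦ (((star U * N * U) j j).re : ℂ)) * star U)).trace := by
  have hUU : star U * U = 1 := Matrix.mem_unitaryGroup_iff'.mp hU
  have hconj : ∀ D : Mat d, star U * (U * D * star U) * U = D := fun D ↦ by
    rw [← mul_assoc, ← mul_assoc, hUU, one_mul, mul_assoc, hUU, mul_one]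
  rw [Matrix.trace_mul_diagonal_mul_star_mul, Matrix.trace_mul_diagonal_mul_star_mul, hconj]
  refine Finset.sum_congr rfl fun j _ ↦ ?_
  rw [Matrix.diagonal_apply_eq]
  exact congrArg _ ((Matrix.isHermitian_conjTranspose_mul_mul U hN).coe_re_apply_self j).symm

theorem exists_eprior_eq_eprior_postProcess {X Y T : Type*} [Fintype X] [Fintype Y] [Fintype T]
    {E : X → Mat d} (hE : ∀ x, (E x).IsHermitian) (hcomm : ∀ x x', Commute (E x) (E x'))
    (f : X → Y → ℝ) (α : T → X → ℝ) {N : T → Y → Mat d} (hN : ∀ t, IsMeasurement (N t)) :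
    ∃ (M : Fin d → Mat d) (ν : T → Y → Fin d → ℝ), IsMeasurement M ∧ IsPostProc ν ∧
      Eprior f α E N = Eprior f α E (postProcess ν M) := by
  obtain ⟨U, hU, c, hEU⟩ :=
    Matrix.exists_unitary_forall_eq_mul_diagonal_mul_star_of_commute hE hcomm
  refine ⟨basisMeasurement U, fun t y j ↦ ((star U * N t y * U) j j).re,
    isMeasurement_basisMeasurement hU, isPostProc_re_diag fun t ↦ (hN t).star_mul_mul hU,
    eprior_congr f α E fun x t y ↦ ?_⟩
  rw [postProcess_basisMeasurement, hEU x]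
  exact trace_mul_eq_trace_mul_pinching hU (c x) ((hN t).1 y).isHermitian

end Measurements

theorem stmt13_general {d : ℕ} {X Y T : Type} [Fintype X] [Fintype Y] [Fintype T]
    (E : X → Mat d) (hE : IsStateEnsemble E)
    (hcomm : ∀ x x', E x * E x' = E x' * E x)
    (f : X → Y → ℝ)
    (α : T → X → ℝ) :
    EpriorMax f α E = EpostMax f α E ∧
    ∀ N : T → Y → Mat d, (∀ t, IsMeasurement (N t)) →
      ∃ N' : T → Y → Mat d, IsCompatible N' ∧ Eprior f α E N = Eprior f α E N' := by
  have hherm : ∀ x, (E x).IsHermitian := fun x ↦ (hE.1 x).isHermitian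
  refine ⟨?_, fun N hN ↦ ?_⟩
  · rw [EpriorMax, EpostMax]
    congr 1
    ext p
    constructor
    · rintro ⟨N, hN, rfl⟩
      obtain ⟨M, ν, hM, hν, h⟩ := exists_eprior_eq_eprior_postProcess hherm hcomm f α hN
      exact ⟨d, M, ν, hM, hν, h.trans (epost_eq_eprior_postProcess f α E M ν).symm⟩
    · rintro ⟨n, M, ν, hM, hν, rfl⟩
      exact ⟨postProcess ν M, hM.postProcess hν, epost_eq_eprior_postProcess f α E M ν⟩
  · obtain ⟨M, ν, hM, hν, h⟩ := exists_eprior_eq_eprior_postProcess hherm hcomm f α hN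
    exact ⟨postProcess ν M, ⟨d, M, ν, hM, hν, fun _ _ ↦ rfl⟩, h⟩

theorem stmt13 {d : ℕ} {X Y T : Type} [Fintype X] [Fintype Y] [Fintype T]
    (E : X → Mat d) (hE : IsStateEnsemble E)
    (hcomm : ∀ x x', E x * E x' = E x' * E x)
    (f : X → Y → ℝ) (hf : IsScore f)
    (α : T → X → ℝ) (hα : IsPartialInfo α) :
    EpriorMax f α E = EpostMax f α E ∧
    ∀ N : T → Y → Mat d, (∀ t, IsMeasurement (N t)) →
      ∃ N' : T → Y → Mat d, IsCompatible N' ∧ Eprior f α E N = Eprior f α E N' :=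
  stmt13_general E hE hcomm f α
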